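/- arXiv:1201.6477 — 5 statements merged into one kernel-verified Lean document; each statement's English description precedes it below -/
import Mathlib

section
/- For all real x with 0 < |x| < π/2, one has 3 + (1/60)·x³·sin x < 2x/sin x + x/tan x. -/
/-!
The expression is even in `x`, so it suffices to treat `0 < x < π / 2`. For `x ≥ 0` the Taylor
polynomials of `sin` and `cos` alternately over- and underestimate them, each bound being integrated
from the previous one; in particular `sin x ≤ x - x³/6 + x⁵/120` and
`cos x ≥ 1 - x²/2 + x⁴/24 - x⁶/720`. Substituting these leaves a polynomial inequality whose
defect is `x⁷ (1/240 - x²/1350 + x⁴/21600 - x⁶/864000)`, positive for `x² < 5/2`.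
-/

open Real Finset

noncomputable def sinTaylor (n : ℕ) (x : ℝ) : ℝ :=
  ∑ k ∈ range n, (-1) ^ k * x ^ (2 * k + 1) / (2 * k + 1).factorial

noncomputable def cosTaylor (n : ℕ) (x : ℝ) : ℝ :=
  ∑ k ∈ range n, (-1) ^ k * x ^ (2 * k) / (2 * k).factorial

lemma hasDerivAt_sinTaylor (n : ℕ) (x : ℝ) : HasDerivAt (sinTaylor n) (cosTaylor n x) x := by
  unfold sinTaylor cosTaylor
  refine HasDerivAt.fun_sum fun k _ => ?_
  refine (((hasDerivAt_pow _ x).const_mul _).div_const _).congr_deriv ?_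
  rw [Nat.factorial_succ]
  push_cast
  field_simp

lemma hasDerivAt_cosTaylor_succ (n : ℕ) (x : ℝ) :
    HasDerivAt (cosTaylor (n + 1)) (-sinTaylor n x) x := by
  have h : cosTaylor (n + 1) = fun y =>
      ∑ k ∈ range n, (-1 : ℝ) ^ (k + 1) * y ^ (2 * k + 2) / (2 * k + 2).factorial + 1 := by
    funext y
    simp [cosTaylor, sum_range_succ', mul_add]
  rw [h, sinTaylor, ← sum_neg_distrib]
  refine (HasDerivAt.fun_sum fun k _ => ?_).add_const 1
  refine (((hasDerivAt_pow _ x).const_mul _).div_const _).congr_deriv ?_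
  rw [Nat.factorial_succ]
  push_cast
  field_simp
  ring

lemma nonneg_of_hasDerivAt_nonneg {f f' : ℝ → ℝ} (hf : ∀ x, HasDerivAt f (f' x) x)
    (h0 : 0 ≤ f 0) (hf' : ∀ x, 0 ≤ x → 0 ≤ f' x) {x : ℝ} (hx : 0 ≤ x) : 0 ≤ f x := by
  have hmono : MonotoneOn f (Set.Ici 0) :=
    monotoneOn_of_deriv_nonneg (convex_Ici 0)
      (HasDerivAt.continuousOn fun y _ => hf y)
      (fun y _ => (hf y).differentiableAt.differentiableWithinAt)
      (fun y hy => (hf y).deriv ▸ hf' y (interior_Ici (a := (0:ℝ)) ▸ hy).le)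
  exact h0.trans (hmono Set.self_mem_Ici hx hx)

lemma neg_one_pow_mul_sin_sub_sinTaylor_nonneg_of_cos {n : ℕ}
    (hcos : ∀ x, 0 ≤ x → 0 ≤ (-1) ^ n * (cos x - cosTaylor n x)) {x : ℝ} (hx : 0 ≤ x) :
    0 ≤ (-1) ^ n * (sin x - sinTaylor n x) :=
  nonneg_of_hasDerivAt_nonneg
    (fun y => ((hasDerivAt_sin y).sub (hasDerivAt_sinTaylor n y)).const_mul _)
    (by simp [sinTaylor]) hcos hx

lemma neg_one_pow_mul_cos_sub_cosTaylor_nonneg_of_sin {n : ℕ}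
    (hsin : ∀ x, 0 ≤ x → 0 ≤ (-1) ^ n * (sin x - sinTaylor n x)) {x : ℝ} (hx : 0 ≤ x) :
    0 ≤ (-1) ^ (n + 1) * (cos x - cosTaylor (n + 1) x) := by
  refine nonneg_of_hasDerivAt_nonneg
    (fun y => ((hasDerivAt_cos y).sub (hasDerivAt_cosTaylor_succ n y)).const_mul _)
    (by simp [cosTaylor, sum_range_succ']) (fun y hy => ?_) hx
  convert hsin y hy using 1
  ring

theorem neg_one_pow_mul_cos_sub_cosTaylor_nonneg {n : ℕ} (hn : 1 ≤ n) {x : ℝ} (hx : 0 ≤ x) :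
    0 ≤ (-1) ^ n * (cos x - cosTaylor n x) := by
  induction n, hn using Nat.le_induction generalizing x with
  | base => simpa [cosTaylor] using cos_le_one x
  | succ n _ ih =>
    exact neg_one_pow_mul_cos_sub_cosTaylor_nonneg_of_sin
      (fun y hy => neg_one_pow_mul_sin_sub_sinTaylor_nonneg_of_cos (fun z hz => ih hz) hy) hx

theorem neg_one_pow_mul_sin_sub_sinTaylor_nonneg {n : ℕ} (hn : 1 ≤ n) {x : ℝ} (hx : 0 ≤ x) :
    0 ≤ (-1) ^ n * (sin x - sinTaylor n x) :=
  neg_one_pow_mul_sin_sub_sinTaylor_nonneg_of_cos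
    (fun _ hy => neg_one_pow_mul_cos_sub_cosTaylor_nonneg hn hy) hx

lemma sin_le_quintic {x : ℝ} (hx : 0 ≤ x) : sin x ≤ x - x ^ 3 / 6 + x ^ 5 / 120 := by
  have h := neg_one_pow_mul_sin_sub_sinTaylor_nonneg (n := 3) (by norm_num) hx
  norm_num [sinTaylor, sum_range_succ, Nat.factorial] at h
  linarith

lemma sextic_le_cos {x : ℝ} (hx : 0 ≤ x) :
    1 - x ^ 2 / 2 + x ^ 4 / 24 - x ^ 6 / 720 ≤ cos x := by
  have h := neg_one_pow_mul_cos_sub_cosTaylor_nonneg (n := 4) (by norm_num) hx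
  norm_num [cosTaylor, sum_range_succ, Nat.factorial] at h
  linarith

lemma huygens_polynomial {x : ℝ} (hx : 0 < x) (hx2 : x ^ 2 < 5 / 2) :
    (3 + 1 / 60 * x ^ 3 * (x - x ^ 3 / 6 + x ^ 5 / 120)) * (x - x ^ 3 / 6 + x ^ 5 / 120)
      < 2 * x + x * (1 - x ^ 2 / 2 + x ^ 4 / 24 - x ^ 6 / 720) := by
  have hQ : 0 < 1 / 240 - x ^ 2 / 1350 + x ^ 4 / 21600 - x ^ 6 / 864000 := by
    nlinarith [sq_nonneg x, sq_nonneg (x ^ 2), pow_pos hx 2]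
  nlinarith [mul_pos (pow_pos hx 7) hQ]

lemma huygens_lower_of_pos {x : ℝ} (hx : 0 < x) (hx2 : x < π / 2) :
    3 + (1 / 60) * x ^ 3 * sin x < 2 * x / sin x + x / tan x := by
  have hsin : 0 < sin x := sin_pos_of_pos_of_lt_pi hx (by linarith [pi_pos])
  rw [tan_eq_sin_div_cos, div_div_eq_mul_div, ← add_div, lt_div_iff₀ hsin]
  calc (3 + 1 / 60 * x ^ 3 * sin x) * sin x
      ≤ (3 + 1 / 60 * x ^ 3 * (x - x ^ 3 / 6 + x ^ 5 / 120)) * (x - x ^ 3 / 6 + x ^ 5 / 120) := by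
        have hsin_le := sin_le_quintic hx.le
        gcongr
        nlinarith [pow_pos hx 3]
    _ < 2 * x + x * (1 - x ^ 2 / 2 + x ^ 4 / 24 - x ^ 6 / 720) :=
        huygens_polynomial hx (by nlinarith [pi_lt_d2])
    _ ≤ 2 * x + x * cos x := by gcongr; exact sextic_le_cos hx.le

theorem huygens_lower (x : ℝ) (h1 : 0 < |x|) (h2 : |x| < π / 2) :
    3 + (1 / 60) * x ^ 3 * Real.sin x < 2 * x / Real.sin x + x / Real.tan x := by
  rcases lt_or_gt_of_ne (abs_pos.mp h1) with hneg | hpos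
  · have h := huygens_lower_of_pos (neg_pos.mpr hneg) (by rwa [abs_of_neg hneg] at h2)
    simpa [sin_neg, tan_neg, neg_div_neg_eq, Odd.neg_pow (by decide : Odd 3)] using h
  · exact huygens_lower_of_pos hpos (by rwa [abs_of_pos hpos] at h2)
end

section
/- The constant 1/60 is best possible in the inequality 2x/sin x + x/tan x > 3 + c·x³·sin x for 0 < x < π/2; precisely, the limit as x → 0⁺ of (2x/sin x + x/tan x − 3)/(x³ sin x) equals 1/60. -/
/-! Clearing denominators, the quotient equals `N x / x ^ 5 * (x / sin x) ^ 2` with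
`N x = x (2 + cos x) - 3 sin x`. Three applications of l'Hôpital's rule reduce `N x / x ^ 5`
to `x sin x / (60 x ^ 2)`, which tends to `1 / 60` because `sin x / x → 1`. -/

open Real Filter Topology

theorem lhopital_nhdsNE_of_apply_eq_zero {f g f' g' : ℝ → ℝ} {a : ℝ} {l : Filter ℝ}
    (hf : ∀ x, HasDerivAt f (f' x) x) (hg : ∀ x, HasDerivAt g (g' x) x)
    (hfa : f a = 0) (hga : g a = 0) (hg' : ∀ᶠ x in 𝓝[≠] a, g' x ≠ 0)
    (hdiv : Tendsto (fun x => f' x / g' x) (𝓝[≠] a) l) :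
    Tendsto (fun x => f x / g x) (𝓝[≠] a) l := by
  have hf0 : Tendsto f (𝓝[≠] a) (𝓝 0) :=
    hfa ▸ (hf a).continuousAt.tendsto.mono_left nhdsWithin_le_nhds
  have hg0 : Tendsto g (𝓝[≠] a) (𝓝 0) :=
    hga ▸ (hg a).continuousAt.tendsto.mono_left nhdsWithin_le_nhds
  exact HasDerivAt.lhopital_zero_nhdsNE (.of_forall hf) (.of_forall hg) hg' hf0 hg0 hdiv

theorem Real.tendsto_sin_div_self : Tendsto (fun x => sin x / x) (𝓝[≠] 0) (𝓝 1) := by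
  have h : Tendsto sinc (𝓝[≠] 0) (𝓝 1) :=
    sinc_zero ▸ (continuous_sinc.tendsto 0).mono_left nhdsWithin_le_nhds
  exact h.congr' (eventually_mem_nhdsWithin.mono fun x hx => sinc_of_ne_zero hx)

theorem Real.tendsto_self_div_sin : Tendsto (fun x => x / sin x) (𝓝[≠] 0) (𝓝 1) := by
  simpa using tendsto_sin_div_self.inv₀ one_ne_zero

theorem hasDerivAt_huygens_numerator (x : ℝ) :
    HasDerivAt (fun x => x * (2 + cos x) - 3 * sin x) (2 - 2 * cos x - x * sin x) x :=
  (((hasDerivAt_id' x).mul ((hasDerivAt_cos x).const_add 2)).sub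
    ((hasDerivAt_sin x).const_mul 3)).congr_deriv (by ring)

theorem hasDerivAt_two_sub_two_mul_cos_sub_mul_sin (x : ℝ) :
    HasDerivAt (fun x => 2 - 2 * cos x - x * sin x) (sin x - x * cos x) x :=
  ((((hasDerivAt_cos x).const_mul 2).const_sub 2).sub
    ((hasDerivAt_id' x).mul (hasDerivAt_sin x))).congr_deriv (by ring)

theorem hasDerivAt_sin_sub_mul_cos (x : ℝ) :
    HasDerivAt (fun x => sin x - x * cos x) (x * sin x) x :=
  ((hasDerivAt_sin x).sub ((hasDerivAt_id' x).mul (hasDerivAt_cos x))).congr_deriv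
    (by ring)

theorem tendsto_huygens_numerator_div_pow_five :
    Tendsto (fun x => (x * (2 + cos x) - 3 * sin x) / x ^ 5) (𝓝[≠] 0) (𝓝 (1 / 60)) := by
  have hne : ∀ᶠ x : ℝ in 𝓝[≠] 0, x ≠ 0 := eventually_mem_nhdsWithin
  have h3 : Tendsto (fun x => x * sin x / (60 * x ^ 2)) (𝓝[≠] 0) (𝓝 (1 / 60)) := by
    refine (tendsto_sin_div_self.div_const 60).congr' (hne.mono fun x hx => ?_)
    field_simp
  have h2 : Tendsto (fun x => (sin x - x * cos x) / (20 * x ^ 3)) (𝓝[≠] 0) (𝓝 (1 / 60)) :=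
    lhopital_nhdsNE_of_apply_eq_zero (g' := fun x => 60 * x ^ 2) hasDerivAt_sin_sub_mul_cos
      (fun x => ((hasDerivAt_pow 3 x).const_mul 20).congr_deriv (by norm_num; ring))
      (by simp) (by simp) (hne.mono fun x hx => by positivity) h3
  have h1 : Tendsto (fun x => (2 - 2 * cos x - x * sin x) / (5 * x ^ 4)) (𝓝[≠] 0)
      (𝓝 (1 / 60)) :=
    lhopital_nhdsNE_of_apply_eq_zero (g' := fun x => 20 * x ^ 3)
      hasDerivAt_two_sub_two_mul_cos_sub_mul_sin
      (fun x => ((hasDerivAt_pow 4 x).const_mul 5).congr_deriv (by norm_num; ring))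
      (by simp) (by simp) (hne.mono fun x hx => by positivity) h2
  exact lhopital_nhdsNE_of_apply_eq_zero (g' := fun x => 5 * x ^ 4) hasDerivAt_huygens_numerator
    (fun x => (hasDerivAt_pow 5 x).congr_deriv (by norm_num))
    (by simp) (by simp) (hne.mono fun x hx => by positivity) h1

theorem huygens_best_constant :
    Tendsto (fun x : ℝ => (2 * x / Real.sin x + x / Real.tan x - 3) / (x ^ 3 * Real.sin x))
      (nhdsWithin 0 (Set.Ioi 0)) (nhds (1 / 60)) := by
  have hlim := (tendsto_huygens_numerator_div_pow_five.mul
    (tendsto_self_div_sin.mul tendsto_self_div_sin)).mono_left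
    (nhdsWithin_mono 0 fun x (hx : 0 < x) => hx.ne')
  rw [mul_one, mul_one] at hlim
  refine hlim.congr' ?_
  filter_upwards [Ioo_mem_nhdsGT (show (0 : ℝ) < π / 2 by positivity)] with x hx
  have hsin : sin x ≠ 0 := (sin_pos_of_pos_of_lt_pi hx.1 (by linarith [hx.2, pi_pos])).ne'
  have hcos : cos x ≠ 0 := (cos_pos_of_mem_Ioo ⟨by linarith [hx.1, pi_pos], hx.2⟩).ne'
  rw [tan_eq_sin_div_cos]
  field_simp
end

section
/- For all x > 0, one has sinh x/x + (tanh(x/2)/(x/2))² > 2 + (23/720)·x³·tanh x. -/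
/-!
The inequality is tight to fourth order at `0`, so the three functions involved are replaced by
sharp enough elementary bounds: `sinh x / x` by its Taylor polynomial of degree six, and `tanh`
from above and below by two consecutive convergents of Lambert's continued fraction
`tanh x = x / (1 + x² / (3 + x² / (5 + ⋯)))`. The convergent bounds are the positivity of
`x ^ (n + 1) i_n(x)` for `n = 3, 4`, where `i_n` is the modified spherical Bessel function:
these functions vanish at `0` and each has derivative `x` times the previous one.
After the substitution, the difference of the two sides is `x⁶` times a rational function
of `x²` with positive coefficients.
-/

open Real
open scoped Nat

/-- `x ^ (n + 1) * i_n x`, where `i_n` is the modified spherical Bessel function of the first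
kind; the recursion is the three-term recurrence of the `i_n`. -/
noncomputable def scaledSphBesselI : ℕ → ℝ → ℝ
  | 0, x => sinh x
  | 1, x => x * cosh x - sinh x
  | n + 2, x => x ^ 2 * scaledSphBesselI n x - (2 * n + 3) * scaledSphBesselI (n + 1) x

@[simp]
lemma scaledSphBesselI_apply_zero (n : ℕ) : scaledSphBesselI n 0 = 0 := by
  induction n using Nat.strong_induction_on with
  | _ n ih =>
    match n with
    | 0 => simp [scaledSphBesselI]
    | 1 => simp [scaledSphBesselI]
    | n + 2 => simp [scaledSphBesselI, ih n (by omega), ih (n + 1) (by omega)]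

lemma hasDerivAt_scaledSphBesselI_succ (n : ℕ) (x : ℝ) :
    HasDerivAt (scaledSphBesselI (n + 1)) (x * scaledSphBesselI n x) x := by
  induction n using Nat.strong_induction_on generalizing x with
  | _ n ih =>
    match n with
    | 0 =>
      refine (((hasDerivAt_id' x).mul (hasDerivAt_cosh x)).sub (hasDerivAt_sinh x)).congr_deriv ?_
      simp only [scaledSphBesselI]
      ring
    | 1 =>
      refine (((hasDerivAt_pow 2 x).mul
        (hasDerivAt_sinh x : HasDerivAt (scaledSphBesselI 0) _ x)).sub
        ((ih 0 (by omega) x).const_mul (2 * (0 : ℕ) + 3 : ℝ))).congr_deriv ?_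
      simp only [scaledSphBesselI]
      push_cast
      ring
    | n + 2 =>
      refine (((hasDerivAt_pow 2 x).mul (ih n (by omega) x)).sub
        ((ih (n + 1) (by omega) x).const_mul (2 * (n + 1 : ℕ) + 3 : ℝ))).congr_deriv ?_
      rw [scaledSphBesselI]
      push_cast
      ring

lemma pos_of_hasDerivAt_of_apply_zero {f f' : ℝ → ℝ} (hf : ∀ x, HasDerivAt f (f' x) x)
    (h₀ : f 0 = 0) (hf' : ∀ x, 0 < x → 0 < f' x) {x : ℝ} (hx : 0 < x) : 0 < f x := by
  have hmono : StrictMonoOn f (Set.Ici 0) :=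
    strictMonoOn_of_hasDerivWithinAt_pos (convex_Ici 0)
      (fun y _ ↦ (hf y).continuousAt.continuousWithinAt)
      (fun y _ ↦ (hf y).hasDerivWithinAt) (fun y hy ↦ hf' y (by simpa using hy))
  simpa [h₀] using hmono Set.self_mem_Ici hx.le hx

lemma scaledSphBesselI_pos (n : ℕ) {x : ℝ} (hx : 0 < x) : 0 < scaledSphBesselI n x := by
  induction n generalizing x with
  | zero => exact sinh_pos_iff.mpr hx
  | succ n ih =>
    exact pos_of_hasDerivAt_of_apply_zero (hasDerivAt_scaledSphBesselI_succ n)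
      (scaledSphBesselI_apply_zero _) (fun y hy ↦ mul_pos hy (ih hy)) hx

lemma scaledSphBesselI_nonneg (n : ℕ) {x : ℝ} (hx : 0 ≤ x) : 0 ≤ scaledSphBesselI n x := by
  rcases hx.eq_or_lt with rfl | hx
  · simp
  · exact (scaledSphBesselI_pos n hx).le

lemma tanh_le_mul_div (x : ℝ) (hx : 0 ≤ x) :
    tanh x ≤ x * (15 + x ^ 2) / (15 + 6 * x ^ 2) := by
  have h := scaledSphBesselI_nonneg 3 hx
  simp only [scaledSphBesselI] at h
  push_cast at h
  rw [tanh_eq_sinh_div_cosh, div_le_div_iff₀ (cosh_pos x) (by positivity)]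
  linarith

lemma mul_div_le_tanh (x : ℝ) (hx : 0 ≤ x) :
    x * (105 + 10 * x ^ 2) / (105 + 45 * x ^ 2 + x ^ 4) ≤ tanh x := by
  have h := scaledSphBesselI_nonneg 4 hx
  simp only [scaledSphBesselI] at h
  push_cast at h
  rw [tanh_eq_sinh_div_cosh, div_le_div_iff₀ (by positivity) (cosh_pos x)]
  linarith

lemma sum_range_le_sinh {x : ℝ} (hx : 0 ≤ x) (n : ℕ) :
    ∑ i ∈ Finset.range n, x ^ (2 * i + 1) / (2 * i + 1)! ≤ sinh x :=
  sum_le_hasSum _ (fun i _ ↦ by positivity) (hasSum_sinh x)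

lemma two_add_lt (x : ℝ) (hx : 0 < x) :
    2 + 23 / 720 * (x ^ 4 * (15 + x ^ 2) / (15 + 6 * x ^ 2)) <
      1 + x ^ 2 / 6 + x ^ 4 / 120 + x ^ 6 / 5040 +
        ((1680 + 40 * x ^ 2) / (1680 + 180 * x ^ 2 + x ^ 4)) ^ 2 := by
  rw [← sub_pos]
  have h : 1 + x ^ 2 / 6 + x ^ 4 / 120 + x ^ 6 / 5040 +
        ((1680 + 40 * x ^ 2) / (1680 + 180 * x ^ 2 + x ^ 4)) ^ 2 -
      (2 + 23 / 720 * (x ^ 4 * (15 + x ^ 2) / (15 + 6 * x ^ 2))) =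
      x ^ 6 * (1658160000 + 191016000 * x ^ 2 + 8573520 * x ^ 4 + 255975 * x ^ 6 +
        2266 * x ^ 8 + 6 * x ^ 10) /
        (5040 * (1680 + 180 * x ^ 2 + x ^ 4) ^ 2 * (15 + 6 * x ^ 2)) := by
    field_simp
    ring
  rw [h]
  positivity

theorem hyperbolic_wilker (x : ℝ) (hx : 0 < x) :
    Real.sinh x / x + (Real.tanh (x / 2) / (x / 2)) ^ 2 >
      2 + (23 / 720) * x ^ 3 * Real.tanh x := by
  have hsinh : 1 + x ^ 2 / 6 + x ^ 4 / 120 + x ^ 6 / 5040 ≤ sinh x / x := by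
    have h := sum_range_le_sinh hx.le 4
    simp only [Finset.sum_range_succ, Finset.sum_range_zero] at h
    norm_num [Nat.factorial] at h
    rw [le_div_iff₀ hx]
    linarith
  have htanh_half : (1680 + 40 * x ^ 2) / (1680 + 180 * x ^ 2 + x ^ 4) ≤ tanh (x / 2) / (x / 2) := by
    rw [le_div_iff₀ (by positivity)]
    calc (1680 + 40 * x ^ 2) / (1680 + 180 * x ^ 2 + x ^ 4) * (x / 2)
        = x / 2 * (105 + 10 * (x / 2) ^ 2) / (105 + 45 * (x / 2) ^ 2 + (x / 2) ^ 4) := by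
          field_simp
          ring
      _ ≤ tanh (x / 2) := mul_div_le_tanh (x / 2) (by positivity)
  have htanh : x ^ 3 * tanh x ≤ x ^ 4 * (15 + x ^ 2) / (15 + 6 * x ^ 2) := by
    calc x ^ 3 * tanh x ≤ x ^ 3 * (x * (15 + x ^ 2) / (15 + 6 * x ^ 2)) :=
          mul_le_mul_of_nonneg_left (tanh_le_mul_div x hx.le) (by positivity)
      _ = x ^ 4 * (15 + x ^ 2) / (15 + 6 * x ^ 2) := by ring
  have hsq := pow_le_pow_left₀ (by positivity) htanh_half 2
  linarith [two_add_lt x hx]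
end

section
/- Let a_k, b_k (k ≥ 1) be real numbers with b_k > 0 for all k, such that the power series A(x) = Σ_{k≥1} a_k x^k and B(x) = Σ_{k≥1} b_k x^k converge on (−R, R) for some R > 0. If the sequence a_k/b_k is strictly increasing in k, then the function x ↦ A(x)/B(x) is strictly increasing on (0, R). -/
open Filter

lemma aux_norm_summable (a : ℕ → ℝ) {x r : ℝ} (hx : 0 ≤ x) (hxr : x < r)
    (h : Summable fun k : ℕ => a (k + 1) * r ^ (k + 1)) :
    Summable fun k : ℕ => ‖a (k + 1) * x ^ (k + 1)‖ := by
  have hr : 0 < r := lt_of_le_of_lt hx hxr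
  have hbd : BddAbove (Set.range fun k : ℕ => ‖a (k + 1) * r ^ (k + 1)‖) := by
    have := (h.tendsto_atTop_zero.norm)
    simpa using this.bddAbove_range
  obtain ⟨C, hC⟩ := hbd
  have hCk : ∀ k : ℕ, ‖a (k + 1) * r ^ (k + 1)‖ ≤ C := fun k => hC ⟨k, rfl⟩
  have hq0 : 0 ≤ x / r := div_nonneg hx hr.le
  have hq1 : x / r < 1 := (div_lt_one hr).mpr hxr
  have hgeo : Summable fun k : ℕ => C * (x / r) ^ (k + 1) := by
    have := (summable_geometric_of_lt_one hq0 hq1).mul_left (C * (x / r))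
    refine this.congr fun k => ?_
    ring
  refine Summable.of_nonneg_of_le (fun k => norm_nonneg _) (fun k => ?_) hgeo
  have hxpow : x ^ (k + 1) = r ^ (k + 1) * (x / r) ^ (k + 1) := by
    rw [div_pow]
    field_simp
  calc ‖a (k + 1) * x ^ (k + 1)‖
      = ‖a (k + 1) * r ^ (k + 1)‖ * (x / r) ^ (k + 1) := by
        rw [hxpow, ← mul_assoc, norm_mul (a (k + 1) * r ^ (k + 1))]
        congr 1
        rw [Real.norm_eq_abs]
        exact abs_of_nonneg (pow_nonneg hq0 _)
    _ ≤ C * (x / r) ^ (k + 1) :=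
        mul_le_mul_of_nonneg_right (hCk k) (pow_nonneg hq0 _)


theorem power_series_ratio_strictMono (a b : ℕ → ℝ) (R : ℝ) (hR : 0 < R)
    (hb : ∀ k : ℕ, 1 ≤ k → 0 < b k)
    (hA : ∀ x : ℝ, x ∈ Set.Ioo (-R) R → Summable (fun k : ℕ => a (k + 1) * x ^ (k + 1)))
    (hB : ∀ x : ℝ, x ∈ Set.Ioo (-R) R → Summable (fun k : ℕ => b (k + 1) * x ^ (k + 1)))
    (hmono : StrictMono (fun k : ℕ => a (k + 1) / b (k + 1))) :
    StrictMonoOn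
      (fun x : ℝ => (∑' k : ℕ, a (k + 1) * x ^ (k + 1)) / (∑' k : ℕ, b (k + 1) * x ^ (k + 1)))
      (Set.Ioo 0 R) := by
  intro x hx y hy hxy
  obtain ⟨hx0, hxR⟩ := hx
  obtain ⟨hy0, hyR⟩ := hy
  have hy0' : 0 < y := hx0.trans hxy
  have hmem : ∀ t : ℝ, 0 < t → t < R → t ∈ Set.Ioo (-R) R := fun t ht htR =>
    ⟨by linarith, htR⟩
  set r : ℝ := (y + R) / 2 with hrdef
  have hyr : y < r := by rw [hrdef]; linarith
  have hrR : r < R := by rw [hrdef]; linarith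
  have hr0 : 0 < r := lt_trans hy0' hyr
  have hAr := hA r (hmem r hr0 hrR)
  have hBr := hB r (hmem r hr0 hrR)
  have hxr : x < r := hxy.trans hyr
  have hax := aux_norm_summable a hx0.le hxr hAr
  have hay := aux_norm_summable a hy0'.le hyr hAr
  have hbx := aux_norm_summable b hx0.le hxr hBr
  have hby := aux_norm_summable b hy0'.le hyr hBr
  have hBx : 0 < ∑' k : ℕ, b (k + 1) * x ^ (k + 1) :=
    Summable.tsum_pos (hB x (hmem x hx0 hxR))
      (fun k => (mul_pos (hb (k + 1) (Nat.le_add_left 1 k)) (pow_pos hx0 _)).le) 0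
      (mul_pos (hb 1 le_rfl) (pow_pos hx0 _))
  have hBy : 0 < ∑' k : ℕ, b (k + 1) * y ^ (k + 1) :=
    Summable.tsum_pos (hB y (hmem y hy0 hyR))
      (fun k => (mul_pos (hb (k + 1) (Nat.le_add_left 1 k)) (pow_pos hy0 _)).le) 0
      (mul_pos (hb 1 le_rfl) (pow_pos hy0 _))
  simp only
  rw [div_lt_div_iff₀ hBx hBy]
  -- products as double sums
  have hS1 : Summable (fun p : ℕ × ℕ =>
      (a (p.1 + 1) * x ^ (p.1 + 1)) * (b (p.2 + 1) * y ^ (p.2 + 1))) :=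
    summable_mul_of_summable_norm (f := fun k : ℕ => a (k + 1) * x ^ (k + 1))
      (g := fun k : ℕ => b (k + 1) * y ^ (k + 1)) hax hby
  have hS2 : Summable (fun p : ℕ × ℕ =>
      (a (p.1 + 1) * y ^ (p.1 + 1)) * (b (p.2 + 1) * x ^ (p.2 + 1))) :=
    summable_mul_of_summable_norm (f := fun k : ℕ => a (k + 1) * y ^ (k + 1))
      (g := fun k : ℕ => b (k + 1) * x ^ (k + 1)) hay hbx
  have hprod1 : (∑' k : ℕ, a (k + 1) * x ^ (k + 1)) * (∑' k : ℕ, b (k + 1) * y ^ (k + 1))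
      = ∑' p : ℕ × ℕ, (a (p.1 + 1) * x ^ (p.1 + 1)) * (b (p.2 + 1) * y ^ (p.2 + 1)) :=
    tsum_mul_tsum_of_summable_norm (f := fun k : ℕ => a (k + 1) * x ^ (k + 1))
      (g := fun k : ℕ => b (k + 1) * y ^ (k + 1)) hax hby
  have hprod2 : (∑' k : ℕ, a (k + 1) * y ^ (k + 1)) * (∑' k : ℕ, b (k + 1) * x ^ (k + 1))
      = ∑' p : ℕ × ℕ, (a (p.1 + 1) * y ^ (p.1 + 1)) * (b (p.2 + 1) * x ^ (p.2 + 1)) :=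
    tsum_mul_tsum_of_summable_norm (f := fun k : ℕ => a (k + 1) * y ^ (k + 1))
      (g := fun k : ℕ => b (k + 1) * x ^ (k + 1)) hay hbx
  rw [hprod1, hprod2, ← sub_pos, ← Summable.tsum_sub hS2 hS1]
  set F : ℕ × ℕ → ℝ := fun p =>
    (a (p.1 + 1) * y ^ (p.1 + 1)) * (b (p.2 + 1) * x ^ (p.2 + 1)) -
    (a (p.1 + 1) * x ^ (p.1 + 1)) * (b (p.2 + 1) * y ^ (p.2 + 1)) with hFdef
  have hFsum : Summable F := hS2.sub hS1
  -- key sign facts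
  have hcross : ∀ i j : ℕ, i < j → a (i + 1) * b (j + 1) < a (j + 1) * b (i + 1) := by
    intro i j hij
    have h := hmono hij
    simp only at h
    rwa [div_lt_div_iff₀ (hb (i + 1) (Nat.le_add_left 1 i)) (hb (j + 1) (Nat.le_add_left 1 j))]
      at h
  have hkey : ∀ i j : ℕ, i < j → x ^ (j + 1) * y ^ (i + 1) < y ^ (j + 1) * x ^ (i + 1) := by
    intro i j hij
    obtain ⟨d, rfl⟩ : ∃ d, j = i + d + 1 := ⟨j - i - 1, by omega⟩
    have h1 : x ^ (d + 1) < y ^ (d + 1) := pow_lt_pow_left₀ hxy hx0.le (by omega)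
    calc x ^ (i + d + 1 + 1) * y ^ (i + 1)
        = (x ^ (i + 1) * y ^ (i + 1)) * x ^ (d + 1) := by ring
      _ < (x ^ (i + 1) * y ^ (i + 1)) * y ^ (d + 1) :=
          mul_lt_mul_of_pos_left h1 (mul_pos (pow_pos hx0 _) (pow_pos hy0' _))
      _ = y ^ (i + d + 1 + 1) * x ^ (i + 1) := by ring
  have hGkey : ∀ i j : ℕ, i < j → 0 < F (i, j) + F (j, i) := by
    intro i j hij
    have h1 := hcross i j hij
    have h2 := hkey i j hij
    have heq : F (i, j) + F (j, i) =
        (a (j + 1) * b (i + 1) - a (i + 1) * b (j + 1)) *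
        (y ^ (j + 1) * x ^ (i + 1) - x ^ (j + 1) * y ^ (i + 1)) := by
      simp only [hFdef]
      ring
    rw [heq]
    exact mul_pos (sub_pos.mpr h1) (sub_pos.mpr h2)
  set G : ℕ × ℕ → ℝ := fun p => F p + F (p.2, p.1) with hGdef
  have hFsum' : Summable fun p : ℕ × ℕ => F (p.2, p.1) :=
    (Equiv.prodComm ℕ ℕ).summable_iff.mpr hFsum
  have hGsum : Summable G := hFsum.add hFsum'
  have hGnonneg : ∀ p : ℕ × ℕ, 0 ≤ G p := by
    intro ⟨i, j⟩
    rcases lt_trichotomy i j with h | h | h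
    · exact (hGkey i j h).le
    · subst h
      refine le_of_eq ?_
      simp only [hGdef, hFdef]
      ring
    · have := hGkey j i h
      simp only [hGdef]
      linarith [this]
  have hGpos : 0 < G (1, 0) := by
    have := hGkey 0 1 (by norm_num)
    simp only [hGdef]
    linarith [this]
  have htsumG : 0 < ∑' p : ℕ × ℕ, G p := Summable.tsum_pos hGsum hGnonneg (1, 0) hGpos
  have hGsplit : ∑' p : ℕ × ℕ, G p = (∑' p : ℕ × ℕ, F p) + ∑' p : ℕ × ℕ, F (p.2, p.1) :=
    Summable.tsum_add hFsum hFsum'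
  have hswap : ∑' p : ℕ × ℕ, F (p.2, p.1) = ∑' p : ℕ × ℕ, F p :=
    (Equiv.prodComm ℕ ℕ).tsum_eq F
  rw [hGsplit, hswap] at htsumG
  linarith
end

section
/- The function g(x) = (x/sin x + ((x/2)/tan(x/2))² − 2)/(x³·sin x) is increasing on (0, π/2), with limit 17/720 as x → 0⁺ and limit (π² + 8π − 32)/(2π³) as x → π/2⁻. -/
/-!
Put `t = x / 2`, `s = sin t`, `c = cos t`. Then the ratio is `num / den` with
`num = t s c + t² c⁴ - 2 s² c²` and `den = 16 t³ s³ c³`, and its derivative in `t` is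
`Q / (16 (t s c)⁴)` for an explicit polynomial `Q = derivFactor t s c`. Replacing `s` and `c` in
each monomial of `Q` by the Taylor polynomial of degree 5 or 7, resp. 4 or 6, that bounds it from
the appropriate side leaves `t⁹` times a polynomial in `t²` which is positive on `[0, 1]`, an
interval containing `(0, π/4)`. Near `0` the Taylor polynomials of degree 5 and 4 give
`num = 17/45 t⁶ + O(t⁸)`, while `den = 16 t⁶ (sinc t)³ (cos t)³`; the limit at `π/2` is the
value at `t = π/4`, by continuity.
-/

open Real Filter

open Set Topology

theorem le_of_hasDerivAt_le {f g f' g' : ℝ → ℝ} (hf : ∀ t, HasDerivAt f (f' t) t)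
    (hg : ∀ t, HasDerivAt g (g' t) t) (h₀ : f 0 ≤ g 0) (h' : ∀ t, 0 < t → f' t ≤ g' t)
    {t : ℝ} (ht : 0 ≤ t) : f t ≤ g t := by
  have hmono : MonotoneOn (fun t => g t - f t) (Ici 0) := by
    refine monotoneOn_of_hasDerivWithinAt_nonneg (convex_Ici 0)
      (fun x _ => ((hg x).sub (hf x)).continuousAt.continuousWithinAt)
      (fun x _ => ((hg x).sub (hf x)).hasDerivWithinAt) fun x hx => ?_
    rw [interior_Ici] at hx
    exact sub_nonneg.2 (h' x hx)
  linarith [hmono self_mem_Ici ht ht]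

namespace Real

theorem cos_le_taylor_four {t : ℝ} (ht : 0 ≤ t) : cos t ≤ 1 - t ^ 2 / 2 + t ^ 4 / 24 :=
  le_of_hasDerivAt_le (g' := fun t => -t + t ^ 3 / 6) hasDerivAt_cos
    (fun t => (((hasDerivAt_pow 2 t).div_const 2).const_sub 1 |>.add
      ((hasDerivAt_pow 4 t).div_const 24)).congr_deriv (by norm_num; ring))
    (by simp) (fun t ht => by linarith [sin_ge_sub_cube ht.le]) ht

theorem sin_le_taylor_five {t : ℝ} (ht : 0 ≤ t) : sin t ≤ t - t ^ 3 / 6 + t ^ 5 / 120 :=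
  le_of_hasDerivAt_le (g' := fun t => 1 - t ^ 2 / 2 + t ^ 4 / 24) hasDerivAt_sin
    (fun t => ((hasDerivAt_id' t).sub ((hasDerivAt_pow 3 t).div_const 6) |>.add
      ((hasDerivAt_pow 5 t).div_const 120)).congr_deriv (by norm_num; ring))
    (by simp) (fun t ht => cos_le_taylor_four ht.le) ht

theorem taylor_six_le_cos {t : ℝ} (ht : 0 ≤ t) :
    1 - t ^ 2 / 2 + t ^ 4 / 24 - t ^ 6 / 720 ≤ cos t :=
  le_of_hasDerivAt_le (f' := fun t => -t + t ^ 3 / 6 - t ^ 5 / 120)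
    (fun t => (((hasDerivAt_pow 2 t).div_const 2).const_sub 1 |>.add
      ((hasDerivAt_pow 4 t).div_const 24) |>.sub ((hasDerivAt_pow 6 t).div_const 720)).congr_deriv
      (by norm_num; ring))
    hasDerivAt_cos (by simp) (fun t ht => by linarith [sin_le_taylor_five ht.le]) ht

theorem taylor_seven_le_sin {t : ℝ} (ht : 0 ≤ t) :
    t - t ^ 3 / 6 + t ^ 5 / 120 - t ^ 7 / 5040 ≤ sin t :=
  le_of_hasDerivAt_le (f' := fun t => 1 - t ^ 2 / 2 + t ^ 4 / 24 - t ^ 6 / 720)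
    (fun t => ((hasDerivAt_id' t).sub ((hasDerivAt_pow 3 t).div_const 6) |>.add
      ((hasDerivAt_pow 5 t).div_const 120) |>.sub ((hasDerivAt_pow 7 t).div_const 5040)).congr_deriv
      (by norm_num; ring))
    hasDerivAt_sin (by simp) (fun t ht => taylor_six_le_cos ht.le) ht

theorem sin_pos_and_cos_pos {t : ℝ} (ht₀ : 0 < t) (ht : t < π / 2) : 0 < sin t ∧ 0 < cos t :=
  ⟨sin_pos_of_pos_of_lt_pi ht₀ (by linarith [pi_pos]), cos_pos_of_mem_Ioo ⟨by linarith, ht⟩⟩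

end Real

noncomputable def wilkerRatio (x : ℝ) : ℝ :=
  (x / sin x + ((x / 2) / tan (x / 2)) ^ 2 - 2) / (x ^ 3 * sin x)

namespace Wilker

def num (t s c : ℝ) : ℝ := t * s * c + t ^ 2 * c ^ 4 - 2 * s ^ 2 * c ^ 2

def den (t s c : ℝ) : ℝ := 16 * t ^ 3 * s ^ 3 * c ^ 3

def derivFactor (t s c : ℝ) : ℝ :=
  6 * s ^ 3 * c ^ 3 - 4 * t * s ^ 4 * c ^ 2 - t ^ 2 * s * c ^ 5 - 4 * t ^ 2 * s * c ^ 3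
    + 2 * t ^ 2 * s * c - t ^ 3 * c ^ 4 - 2 * t ^ 3 * c ^ 6

noncomputable def halfRatio (t : ℝ) : ℝ := num t (sin t) (cos t) / den t (sin t) (cos t)

theorem wilkerRatio_eq_halfRatio {x : ℝ} (hx₀ : 0 < x) (hx : x < π) :
    wilkerRatio x = halfRatio (x / 2) := by
  obtain ⟨hs, hc⟩ := sin_pos_and_cos_pos (t := x / 2) (by linarith) (by linarith)
  have hsin : sin x = 2 * sin (x / 2) * cos (x / 2) := by
    rw [← sin_two_mul, mul_div_cancel₀ x two_ne_zero]
  rw [wilkerRatio, halfRatio, num, den, hsin, tan_eq_sin_div_cos]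
  field_simp
  ring

theorem hasDerivAt_halfRatio {t : ℝ} (ht : t ≠ 0) (hs : sin t ≠ 0) (hc : cos t ≠ 0) :
    HasDerivAt halfRatio (derivFactor t (sin t) (cos t) / (16 * (t * sin t * cos t) ^ 4)) t := by
  have hS := hasDerivAt_sin t
  have hC := hasDerivAt_cos t
  have hT := hasDerivAt_id' t
  have hN := ((hT.mul hS).mul hC).add ((hT.pow 2).mul (hC.pow 4)) |>.sub
    (((hS.pow 2).const_mul 2).mul (hC.pow 2))
  have hD := (((hT.pow 3).const_mul 16).mul (hS.pow 3)).mul (hC.pow 3)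
  have hD₀ : den t (sin t) (cos t) ≠ 0 := by simp [den, ht, hs, hc]
  refine (hN.div hD hD₀).congr_deriv ?_
  simp only [derivFactor, Pi.add_apply, Pi.sub_apply, Pi.mul_apply, Pi.pow_apply]
  field_simp
  linear_combination t ^ 3 * sin t ^ 2 * cos t ^ 2 * (2 * sin t ^ 2 * cos t + 2 * t * sin t
    - t ^ 2 * cos t ^ 3) * sin_sq_add_cos_sq t

theorem derivFactor_ge {t s c s₁ s₂ c₁ c₂ : ℝ} (ht : 0 ≤ t) (hs₁ : 0 ≤ s₁) (hs₁s : s₁ ≤ s)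
    (hss₂ : s ≤ s₂) (hc₁ : 0 ≤ c₁) (hc₁c : c₁ ≤ c) (hcc₂ : c ≤ c₂) :
    6 * s₁ ^ 3 * c₁ ^ 3 - 4 * t * s₂ ^ 4 * c₂ ^ 2 - t ^ 2 * s₂ * c₂ ^ 5 - 4 * t ^ 2 * s₂ * c₂ ^ 3
      + 2 * t ^ 2 * s₁ * c₁ - t ^ 3 * c₂ ^ 4 - 2 * t ^ 3 * c₂ ^ 6 ≤ derivFactor t s c := by
  have hs : 0 ≤ s := hs₁.trans hs₁s
  have hc : 0 ≤ c := hc₁.trans hc₁c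
  have hs₂ : 0 ≤ s₂ := hs.trans hss₂
  unfold derivFactor
  gcongr

theorem derivFactor_nonneg {t : ℝ} (ht₀ : 0 ≤ t) (ht₁ : t ≤ 1) :
    0 ≤ derivFactor t (sin t) (cos t) := by
  have hu₀ : 0 ≤ t ^ 2 := sq_nonneg t
  have hu₁ : t ^ 2 ≤ 1 := pow_le_one₀ ht₀ ht₁
  have pos (k : ℕ) : 0 ≤ t ^ 9 * (t ^ 2) ^ k := by positivity
  have anti {j k : ℕ} (h : j ≤ k) : t ^ 9 * (t ^ 2) ^ k ≤ t ^ 9 * (t ^ 2) ^ j :=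
    mul_le_mul_of_nonneg_left (pow_le_pow_of_le_one hu₀ hu₁ h) (by positivity)
  have hsin : 0 ≤ t - t ^ 3 / 6 + t ^ 5 / 120 - t ^ 7 / 5040 := by
    linarith [pow_le_pow_of_le_one ht₀ ht₁ (show 1 ≤ 3 by norm_num),
      pow_le_pow_of_le_one ht₀ ht₁ (show 1 ≤ 7 by norm_num), pow_nonneg ht₀ 5, pow_one t]
  have hcos : 0 ≤ 1 - t ^ 2 / 2 + t ^ 4 / 24 - t ^ 6 / 720 := by
    linarith [pow_le_one₀ ht₀ ht₁ (n := 6), pow_nonneg ht₀ 4]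
  refine le_trans ?_ (derivFactor_ge ht₀ hsin (taylor_seven_le_sin ht₀) (sin_le_taylor_five ht₀)
    hcos (taylor_six_le_cos ht₀) (cos_le_taylor_four ht₀))
  -- The bound is `t ^ 9 * M (t ^ 2)` with `M u = 311/420 - 0.958 u + 0.527 u² - 0.165 u³
  -- + 0.032 u⁴ - …`. On `[0, 1]` the cubic part is at least `0.1 + 0.359 (u - 4/3)²`, and the
  -- `u⁴` coefficient outweighs all later negative ones.
  linarith [pos 0, pos 2, pos 4, pos 6, pos 8, pos 9, pos 11, pos 13, pos 15,
    anti (show 2 ≤ 3 by norm_num), anti (show 4 ≤ 5 by norm_num), anti (show 4 ≤ 7 by norm_num),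
    anti (show 4 ≤ 10 by norm_num), anti (show 4 ≤ 12 by norm_num),
    anti (show 4 ≤ 14 by norm_num), mul_nonneg (pos 0) (sq_nonneg (t ^ 2 - 4 / 3))]

theorem monotoneOn_halfRatio : MonotoneOn halfRatio (Ioo 0 1) := by
  have hderiv {t} (ht : t ∈ Ioo (0 : ℝ) 1) := by
    obtain ⟨hs, hc⟩ := sin_pos_and_cos_pos ht.1 (by linarith [ht.2, pi_gt_three])
    exact hasDerivAt_halfRatio ht.1.ne' hs.ne' hc.ne'
  refine monotoneOn_of_hasDerivWithinAt_nonneg (convex_Ioo 0 1)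
    (f' := fun t => derivFactor t (sin t) (cos t) / (16 * (t * sin t * cos t) ^ 4))
    (fun t ht => (hderiv ht).continuousAt.continuousWithinAt) (fun t ht => ?_) (fun t ht => ?_)
  all_goals rw [interior_Ioo] at ht
  · exact (hderiv ht).hasDerivWithinAt
  · exact div_nonneg (derivFactor_nonneg ht.1.le ht.2.le) (by positivity)

theorem abs_num_sub_num_le {t s c s' c' : ℝ} (ht : 0 ≤ t) (hs : |s - s'| ≤ t ^ 7)
    (hc : |c - c'| ≤ t ^ 6) (hst : |s| ≤ t) (hs't : |s'| ≤ t) (hc₁ : |c| ≤ 1) (hc'₁ : |c'| ≤ 1) :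
    |num t s c - num t s' c'| ≤ 14 * t ^ 8 := by
  have hsc : |s * c - s' * c'| ≤ 2 * t ^ 7 := calc
    |s * c - s' * c'| = |(s - s') * c + s' * (c - c')| := by ring_nf
    _ ≤ |s - s'| * |c| + |s'| * |c - c'| := by rw [← abs_mul, ← abs_mul]; exact abs_add_le _ _
    _ ≤ t ^ 7 * 1 + t * t ^ 6 := by gcongr
    _ = 2 * t ^ 7 := by ring
  have hsc' : |s * c + s' * c'| ≤ 2 * t := calc
    |s * c + s' * c'| ≤ |s| * |c| + |s'| * |c'| := by rw [← abs_mul, ← abs_mul]; exact abs_add_le _ _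
    _ ≤ t * 1 + t * 1 := by gcongr
    _ = 2 * t := by ring
  have hc₄ : |c ^ 4 - c' ^ 4| ≤ 4 * t ^ 6 := calc
    |c ^ 4 - c' ^ 4| = |c - c'| * (|c + c'| * |c ^ 2 + c' ^ 2|) := by
      rw [← abs_mul, ← abs_mul]; ring_nf
    _ ≤ t ^ 6 * ((|c| + |c'|) * (c ^ 2 + c' ^ 2)) := by
      gcongr
      · exact abs_add_le _ _
      · exact (abs_of_nonneg (by positivity)).le
    _ ≤ t ^ 6 * ((1 + 1) * (1 + 1)) := by
      gcongr <;> exact (sq_le_one_iff_abs_le_one _).2 ‹_›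
    _ = 4 * t ^ 6 := by ring
  calc |num t s c - num t s' c'|
      = |t * (s * c - s' * c') + t ^ 2 * (c ^ 4 - c' ^ 4)
          - 2 * ((s * c - s' * c') * (s * c + s' * c'))| := by rw [num, num]; ring_nf
    _ ≤ |t * (s * c - s' * c')| + |t ^ 2 * (c ^ 4 - c' ^ 4)|
          + |2 * ((s * c - s' * c') * (s * c + s' * c'))| :=
      (abs_sub _ _).trans (add_le_add_left (abs_add_le _ _) _)
    _ = t * |s * c - s' * c'| + t ^ 2 * |c ^ 4 - c' ^ 4|
          + 2 * (|s * c - s' * c'| * |s * c + s' * c'|) := by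
      simp only [abs_mul, abs_pow, abs_of_nonneg ht, abs_two]
    _ ≤ t * (2 * t ^ 7) + t ^ 2 * (4 * t ^ 6) + 2 * (2 * t ^ 7 * (2 * t)) := by gcongr
    _ = 14 * t ^ 8 := by ring

theorem abs_num_sub_num_taylor_le {t : ℝ} (ht₀ : 0 ≤ t) (ht₁ : t ≤ 1) :
    |num t (sin t) (cos t) - num t (t - t ^ 3 / 6 + t ^ 5 / 120) (1 - t ^ 2 / 2 + t ^ 4 / 24)|
      ≤ 14 * t ^ 8 := by
  have h₃ := pow_le_pow_of_le_one ht₀ ht₁ (show 1 ≤ 3 by norm_num)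
  have h₅ := pow_le_pow_of_le_one ht₀ ht₁ (show 3 ≤ 5 by norm_num)
  have h₄ := pow_le_pow_of_le_one ht₀ ht₁ (show 2 ≤ 4 by norm_num)
  have h₂ := pow_le_one₀ ht₀ ht₁ (n := 2)
  refine abs_num_sub_num_le ht₀ ?_ ?_ ?_ ?_ (abs_cos_le_one t) ?_ <;> rw [abs_le]
  · constructor <;> linarith [taylor_seven_le_sin ht₀, sin_le_taylor_five ht₀, pow_nonneg ht₀ 7]
  · constructor <;> linarith [taylor_six_le_cos ht₀, cos_le_taylor_four ht₀, pow_nonneg ht₀ 6]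
  · exact abs_le.1 (by simpa [abs_of_nonneg ht₀] using abs_sin_le_abs (x := t))
  · constructor <;> linarith [pow_one t, pow_nonneg ht₀ 5]
  · constructor <;> linarith [pow_nonneg ht₀ 4]

theorem tendsto_num_div_pow_six :
    Tendsto (fun t => num t (sin t) (cos t) / t ^ 6) (𝓝[>] 0) (𝓝 (17 / 45)) := by
  let P : ℝ → ℝ := fun t => 17 / 45 - 13 / 36 * t ^ 2 + 5689 / 43200 * t ^ 4
    - 527 / 21600 * t ^ 6 + 319 / 129600 * t ^ 8 - 67 / 518400 * t ^ 10 + 23 / 8294400 * t ^ 12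
  have hP : Tendsto P (𝓝[>] 0) (𝓝 (17 / 45)) := by
    convert ((show Continuous P by fun_prop).tendsto 0).mono_left nhdsWithin_le_nhds using 2
    simp [P]
  have herr : Tendsto (fun t => num t (sin t) (cos t) / t ^ 6 - P t) (𝓝[>] 0) (𝓝 0) := by
    have hbound : Tendsto (fun t : ℝ => 14 * t ^ 2) (𝓝[>] 0) (𝓝 0) := by
      simpa using ((show Continuous (fun t : ℝ => 14 * t ^ 2) by fun_prop).tendsto 0).mono_left
        nhdsWithin_le_nhds
    refine squeeze_zero_norm' ?_ hbound
    filter_upwards [Ioo_mem_nhdsGT one_pos] with t ⟨ht₀, ht₁⟩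
    have h6 : 0 < t ^ 6 := by positivity
    have hP : P t = num t (t - t ^ 3 / 6 + t ^ 5 / 120) (1 - t ^ 2 / 2 + t ^ 4 / 24) / t ^ 6 := by
      field_simp
      simp only [num, P]
      ring
    rw [Real.norm_eq_abs, hP, ← sub_div, abs_div, abs_of_pos h6, div_le_iff₀ h6]
    linarith [abs_num_sub_num_taylor_le ht₀.le ht₁.le]
  simpa using hP.add herr

theorem tendsto_den_div_pow_six :
    Tendsto (fun t => den t (sin t) (cos t) / t ^ 6) (𝓝[>] 0) (𝓝 16) := by
  have h : Tendsto (fun t => 16 * sinc t ^ 3 * cos t ^ 3) (𝓝 0) (𝓝 16) := by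
    convert (show Continuous (fun t => 16 * sinc t ^ 3 * cos t ^ 3) by
      fun_prop).tendsto 0 using 2
    simp
  refine (h.mono_left nhdsWithin_le_nhds).congr' ?_
  filter_upwards [self_mem_nhdsWithin] with t (ht : 0 < t)
  rw [sinc_of_ne_zero ht.ne', den]
  field_simp

theorem tendsto_halfRatio_zero : Tendsto halfRatio (𝓝[>] 0) (𝓝 (17 / 720)) := by
  have h := tendsto_num_div_pow_six.div tendsto_den_div_pow_six (by norm_num)
  rw [show (17 / 720 : ℝ) = 17 / 45 / 16 by norm_num]
  refine h.congr' ?_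
  filter_upwards [self_mem_nhdsWithin] with t (ht : 0 < t)
  rw [halfRatio, Pi.div_apply, div_div_div_cancel_right₀ (by positivity)]

theorem continuousAt_halfRatio_pi_div_four : ContinuousAt halfRatio (π / 4) := by
  obtain ⟨hs, hc⟩ := sin_pos_and_cos_pos (t := π / 4) (by positivity) (by linarith [pi_pos])
  exact (hasDerivAt_halfRatio (by positivity) hs.ne' hc.ne').continuousAt

theorem halfRatio_pi_div_four : halfRatio (π / 4) = (π ^ 2 + 8 * π - 32) / (2 * π ^ 3) := by
  have h2 : √2 ^ 2 = 2 := sq_sqrt zero_le_two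
  rw [halfRatio, num, den, sin_pi_div_four, cos_pi_div_four]
  field_simp
  rw [show √2 ^ 4 = (√2 ^ 2) ^ 2 by ring, h2]
  ring

end Wilker

open Wilker

theorem monotoneOn_wilkerRatio : MonotoneOn wilkerRatio (Ioo 0 (π / 2)) := by
  intro x hx y hy hxy
  rw [wilkerRatio_eq_halfRatio hx.1 (by linarith [hx.2, pi_pos]),
    wilkerRatio_eq_halfRatio hy.1 (by linarith [hy.2, pi_pos])]
  refine monotoneOn_halfRatio ⟨?_, ?_⟩ ⟨?_, ?_⟩ (by linarith) <;>
    linarith [hx.1, hx.2, hy.1, hy.2, pi_lt_four]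

theorem tendsto_wilkerRatio_zero : Tendsto wilkerRatio (𝓝[>] 0) (𝓝 (17 / 720)) := by
  have hhalf : Tendsto (fun x : ℝ => x / 2) (𝓝[>] 0) (𝓝[>] 0) :=
    tendsto_nhdsWithin_of_tendsto_nhds_of_eventually_within _
      ((continuous_id.div_const 2).tendsto' 0 0 (by simp) |>.mono_left nhdsWithin_le_nhds)
      (by filter_upwards [self_mem_nhdsWithin] with x (hx : 0 < x); exact half_pos hx)
  refine (tendsto_halfRatio_zero.comp hhalf).congr' ?_
  filter_upwards [Ioo_mem_nhdsGT pi_pos] with x hx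
  exact (wilkerRatio_eq_halfRatio hx.1 hx.2).symm

theorem tendsto_wilkerRatio_pi_div_two :
    Tendsto wilkerRatio (𝓝[<] (π / 2)) (𝓝 ((π ^ 2 + 8 * π - 32) / (2 * π ^ 3))) := by
  have hhalf : Tendsto (fun x : ℝ => x / 2) (𝓝 (π / 2)) (𝓝 (π / 4)) := by
    rw [show π / 4 = π / 2 / 2 by ring]
    exact tendsto_id.div_const 2
  rw [← halfRatio_pi_div_four]
  refine (continuousAt_halfRatio_pi_div_four.tendsto.comp hhalf |>.mono_left
    nhdsWithin_le_nhds).congr' ?_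
  filter_upwards [Ioo_mem_nhdsLT (show 0 < π / 2 by positivity)] with x hx
  exact (wilkerRatio_eq_halfRatio hx.1 (by linarith [hx.2, pi_pos])).symm

theorem wilker_ratio_monotone :
    MonotoneOn
      (fun x : ℝ =>
        (x / Real.sin x + ((x / 2) / Real.tan (x / 2)) ^ 2 - 2) / (x ^ 3 * Real.sin x))
      (Set.Ioo 0 (π / 2)) ∧
    Tendsto
      (fun x : ℝ =>
        (x / Real.sin x + ((x / 2) / Real.tan (x / 2)) ^ 2 - 2) / (x ^ 3 * Real.sin x))
      (nhdsWithin 0 (Set.Ioi 0)) (nhds (17 / 720)) ∧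
    Tendsto
      (fun x : ℝ =>
        (x / Real.sin x + ((x / 2) / Real.tan (x / 2)) ^ 2 - 2) / (x ^ 3 * Real.sin x))
      (nhdsWithin (π / 2) (Set.Iio (π / 2))) (nhds ((π ^ 2 + 8 * π - 32) / (2 * π ^ 3))) :=
  ⟨monotoneOn_wilkerRatio, tendsto_wilkerRatio_zero, tendsto_wilkerRatio_pi_div_two⟩
end
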